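/- Let K be a finite index set, for each k let ι k be a finite type, let U k : Matrix (ι k) (ι k) ℝ be orthogonal matrices, let D k : Matrix (ι k) (ι k) ℝ be diagonal matrices with nonnegative diagonal entries, let σ : ℝ with σ ≠ 0, and let C k : Matrix (ι k) (ι k) ℝ be arbitrary. Set K_y = (⊗ₖ (U k * D k * (U k)ᵀ)) + σ² • 1 and K' = ⊗ₖ C k. Then trace (K_y⁻¹ * K') = ∑_{i : Π k, ι k} ((∏ k, D k (i k) (i k)) + σ²)⁻¹ * ∏ k, ((U k)ᵀ * C k * U k) (i k) (i k). -/
import Mathlib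


open Matrix

/-- The Kronecker-type product of a finite family of square matrices:
the matrix indexed by `Π k, ι k` whose `(i, j)` entry is `∏ k, A k (i k) (j k)`. -/
noncomputable def kronPi {K : Type*} [Fintype K] [DecidableEq K]
    {ι : K → Type*} [∀ k, Fintype (ι k)]
    (A : ∀ k, Matrix (ι k) (ι k) ℝ) : Matrix (∀ k, ι k) (∀ k, ι k) ℝ :=
  Matrix.of fun i j => ∏ k, A k (i k) (j k)

section aux

variable {K : Type*} [Fintype K] [DecidableEq K]
    {ι : K → Type*} [∀ k, Fintype (ι k)] [∀ k, DecidableEq (ι k)]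

lemma kronPi_mul (A B : ∀ k, Matrix (ι k) (ι k) ℝ) :
    kronPi A * kronPi B = kronPi (fun k => A k * B k) := by
  ext i j
  simp only [kronPi, Matrix.mul_apply, Matrix.of_apply]
  symm
  rw [Finset.prod_univ_sum, Fintype.piFinset_univ]
  simp [Finset.prod_mul_distrib]

lemma kronPi_transpose (A : ∀ k, Matrix (ι k) (ι k) ℝ) :
    (kronPi A)ᵀ = kronPi (fun k => (A k)ᵀ) := by
  ext i j; simp [kronPi]

lemma kronPi_diag {A : ∀ k, Matrix (ι k) (ι k) ℝ} (hA : ∀ k, (A k).IsDiag) :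
    kronPi A = Matrix.diagonal (fun i => ∏ k, A k (i k) (i k)) := by
  ext i j
  by_cases hij : i = j
  · subst hij; simp [kronPi]
  · have : ∃ k, i k ≠ j k := by
      by_contra h
      push_neg at h
      exact hij (funext h)
    obtain ⟨k, hk⟩ := this
    rw [Matrix.diagonal_apply_ne _ hij]
    simp only [kronPi, Matrix.of_apply]
    exact Finset.prod_eq_zero (Finset.mem_univ k) (hA k hk)

lemma kronPi_one : kronPi (fun k => (1 : Matrix (ι k) (ι k) ℝ)) = 1 := by
  rw [kronPi_diag (fun k => Matrix.isDiag_one)]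
  simp

end aux

/-- Closed form for the trace term `Tr(K_y⁻¹ K')` of the derivative of the GP log
likelihood, where `K_y = (⊗ₖ U k D k U kᵀ) + σ² • 1` and `K' = ⊗ₖ C k`. -/
theorem trace_inv_mul_kronPi {K : Type*} [Fintype K] [DecidableEq K]
    {ι : K → Type*} [∀ k, Fintype (ι k)] [∀ k, DecidableEq (ι k)]
    (U D C : ∀ k, Matrix (ι k) (ι k) ℝ)
    (hU : ∀ k, U k * (U k)ᵀ = 1)
    (hD : ∀ k, (D k).IsDiag)
    (hDnonneg : ∀ k, ∀ i : ι k, 0 ≤ D k i i)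
    (σ : ℝ) (hσ : σ ≠ 0) :
    ((kronPi (fun k => U k * D k * (U k)ᵀ) + σ ^ 2 • 1)⁻¹ * kronPi C).trace =
      ∑ i : ∀ k, ι k, ((∏ k, D k (i k) (i k)) + σ ^ 2)⁻¹ *
        ∏ k, ((U k)ᵀ * C k * U k) (i k) (i k) := by
  set 𝒰 : Matrix (∀ k, ι k) (∀ k, ι k) ℝ := kronPi U with h𝒰def
  set d : (∀ k, ι k) → ℝ := fun i => (∏ k, D k (i k) (i k)) + σ ^ 2 with hd
  have hdpos : ∀ i, 0 < d i := fun i =>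
    add_pos_of_nonneg_of_pos (Finset.prod_nonneg fun k _ => hDnonneg k (i k))
      (by positivity)
  have h𝒰 : 𝒰 * 𝒰ᵀ = 1 := by
    rw [h𝒰def, kronPi_transpose, kronPi_mul]
    simp only [hU]
    exact kronPi_one
  have h𝒰' : 𝒰ᵀ * 𝒰 = 1 := mul_eq_one_comm.mp h𝒰
  have hKy : kronPi (fun k => U k * D k * (U k)ᵀ) + σ ^ 2 • 1 =
      𝒰 * Matrix.diagonal d * 𝒰ᵀ := by
    have h1 : kronPi (fun k => U k * D k * (U k)ᵀ) = 𝒰 * kronPi D * 𝒰ᵀ := by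
      rw [h𝒰def, kronPi_transpose, kronPi_mul, kronPi_mul]
    have h2 : Matrix.diagonal d =
        kronPi D + σ ^ 2 • (1 : Matrix (∀ k, ι k) (∀ k, ι k) ℝ) := by
      rw [kronPi_diag hD, Matrix.smul_one_eq_diagonal, Matrix.diagonal_add]
    rw [h1, h2]
    rw [Matrix.mul_add, Matrix.add_mul]
    congr 1
    rw [Matrix.mul_smul, Matrix.smul_mul, Matrix.mul_one, h𝒰]
  have hinv : (kronPi (fun k => U k * D k * (U k)ᵀ) + σ ^ 2 • 1)⁻¹ =
      𝒰 * Matrix.diagonal (fun i => (d i)⁻¹) * 𝒰ᵀ := by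
    rw [hKy]
    refine Matrix.inv_eq_left_inv ?_
    have hdd : Matrix.diagonal (fun i => (d i)⁻¹) * Matrix.diagonal d =
        (1 : Matrix (∀ k, ι k) (∀ k, ι k) ℝ) := by
      rw [Matrix.diagonal_mul_diagonal]
      have : (fun i => (d i)⁻¹ * d i) = fun _ => (1 : ℝ) :=
        funext fun i => inv_mul_cancel₀ (hdpos i).ne'
      rw [this, Matrix.diagonal_one]
    calc 𝒰 * Matrix.diagonal (fun i => (d i)⁻¹) * 𝒰ᵀ * (𝒰 * Matrix.diagonal d * 𝒰ᵀ)
        = 𝒰 * (Matrix.diagonal (fun i => (d i)⁻¹) * ((𝒰ᵀ * 𝒰) *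
            (Matrix.diagonal d * 𝒰ᵀ))) := by simp [Matrix.mul_assoc]
      _ = 𝒰 * ((Matrix.diagonal (fun i => (d i)⁻¹) * Matrix.diagonal d) * 𝒰ᵀ) := by
            rw [h𝒰', Matrix.one_mul, Matrix.mul_assoc]
      _ = 1 := by rw [hdd, Matrix.one_mul, h𝒰]
  rw [hinv]
  have hcyc : 𝒰 * Matrix.diagonal (fun i => (d i)⁻¹) * 𝒰ᵀ * kronPi C =
      𝒰 * (Matrix.diagonal (fun i => (d i)⁻¹) * (𝒰ᵀ * kronPi C)) := by
    simp [Matrix.mul_assoc]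
  rw [hcyc, Matrix.trace_mul_comm, Matrix.mul_assoc, Matrix.mul_assoc]
  have hconj : 𝒰ᵀ * (kronPi C * 𝒰) = kronPi (fun k => (U k)ᵀ * C k * U k) := by
    rw [h𝒰def, kronPi_transpose, kronPi_mul, kronPi_mul]
    simp [Matrix.mul_assoc]
  rw [hconj, Matrix.trace]
  refine Finset.sum_congr rfl fun i _ => ?_
  simp [Matrix.diag, Matrix.diagonal_mul, kronPi, hd]
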